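/- The Marcus jump map is linear to first order in the jump: if β is C¹ with Lipschitz derivative, then H(u, v) = u + β(u)·v + o(‖v‖) as v → 0; in particular ‖H(u,v) − u − β(u)·v‖ ≤ C‖v‖² for ‖v‖ ≤ 1 with a constant C depending on the Lipschitz constants of β and its derivative. -/
import Mathlib

open Matrix Set

lemma mv_bound {d n : ℕ} (A : Matrix (Fin d) (Fin n) ℝ) (v : Fin n → ℝ) (C : ℝ)
    (hC : 0 ≤ C) (h : ∀ i j, |A i j| ≤ C) : ‖A *ᵥ v‖ ≤ n * C * ‖v‖ := by
  rw [pi_norm_le_iff_of_nonneg (by positivity)]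
  intro i
  have : (A *ᵥ v) i = ∑ j, A i j * v j := by
    simp [Matrix.mulVec, dotProduct]
  rw [Real.norm_eq_abs, this]
  calc |∑ j, A i j * v j| ≤ ∑ j, |A i j * v j| := Finset.abs_sum_le_sum_abs _ _
    _ ≤ ∑ _j : Fin n, C * ‖v‖ := by
        apply Finset.sum_le_sum
        intro j _
        rw [abs_mul]
        exact mul_le_mul (h i j) (by simpa using norm_le_pi_norm v j) (abs_nonneg _) hC
    _ = n * C * ‖v‖ := by simp [Finset.sum_const, mul_assoc]

/-- The Marcus jump map is linear to first order in the jump: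
H(u,v) = u + β(u)·v + o(‖v‖) as v → 0, and indeed
‖H(u,v) − u − β(u)·v‖ ≤ C‖v‖² for ‖v‖ ≤ 1. -/
theorem marcus_jump_map_first_order (d n : ℕ)
    (β : (Fin d → ℝ) → Matrix (Fin d) (Fin n) ℝ) (K K' : NNReal) (M : ℝ)
    (hbd : ∀ x i j, |β x i j| ≤ M)
    (hsmooth : ∀ i j, ContDiff ℝ 1 fun x => β x i j)
    (hlip : ∀ i j, LipschitzWith K fun x => β x i j)
    (hlip' : ∀ i j, LipschitzWith K' fun x => fderiv ℝ (fun y => β y i j) x)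
    (Ψ : (Fin d → ℝ) → (Fin n → ℝ) → ℝ → Fin d → ℝ)
    (hΨ0 : ∀ u v, Ψ u v 0 = u)
    (hΨ : ∀ u v r, HasDerivAt (Ψ u v) (β (Ψ u v r) *ᵥ v) r)
    (H : (Fin d → ℝ) → (Fin n → ℝ) → Fin d → ℝ)
    (hH : ∀ u v, H u v = Ψ u v 1) :
    ∀ u : Fin d → ℝ,
      (∃ C : ℝ, ∀ v : Fin n → ℝ, ‖v‖ ≤ 1 →
        ‖H u v - u - β u *ᵥ v‖ ≤ C * ‖v‖ ^ 2) ∧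
      Asymptotics.IsLittleO (nhds (0 : Fin n → ℝ))
        (fun v => H u v - u - β u *ᵥ v) (fun v => ‖v‖) := by
  intro u
  set M₀ : ℝ := max M 0 with hM₀
  have hM₀0 : 0 ≤ M₀ := le_max_right _ _
  have hbd' : ∀ x i j, |β x i j| ≤ M₀ := fun x i j => (hbd x i j).trans (le_max_left _ _)
  set C : ℝ := n * (K * (n * M₀)) with hC
  have hC0 : 0 ≤ C := by positivity
  -- main quadratic bound
  have key : ∀ v : Fin n → ℝ, ‖H u v - u - β u *ᵥ v‖ ≤ C * ‖v‖ ^ 2 := by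
    intro v
    -- step 1: ‖Ψ u v r - u‖ ≤ n * M₀ * ‖v‖ for r ∈ [0,1]
    have step1 : ∀ r ∈ Icc (0:ℝ) 1, ‖Ψ u v r - u‖ ≤ n * M₀ * ‖v‖ := by
      intro r hr
      have := (convex_Icc (0:ℝ) 1).norm_image_sub_le_of_norm_hasDerivWithin_le
        (f := Ψ u v) (C := n * M₀ * ‖v‖)
        (fun x _ => (hΨ u v x).hasDerivWithinAt)
        (fun x _ => mv_bound _ _ _ hM₀0 (fun i j => hbd' _ i j))
        ⟨le_refl 0, zero_le_one⟩ hr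
      calc ‖Ψ u v r - u‖ = ‖Ψ u v r - Ψ u v 0‖ := by rw [hΨ0]
        _ ≤ n * M₀ * ‖v‖ * ‖r - 0‖ := this
        _ ≤ n * M₀ * ‖v‖ * 1 := by
            apply mul_le_mul_of_nonneg_left _ (by positivity)
            rw [Real.norm_eq_abs, sub_zero, abs_of_nonneg hr.1]; exact hr.2
        _ = n * M₀ * ‖v‖ := mul_one _
    -- step 2: derivative bound for g r = Ψ u v r - u - r • (β u *ᵥ v)
    set g : ℝ → Fin d → ℝ := fun r => Ψ u v r - u - r • (β u *ᵥ v) with hg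
    have hg' : ∀ r : ℝ, HasDerivAt g (β (Ψ u v r) *ᵥ v - β u *ᵥ v) r := by
      intro r
      have h1 : HasDerivAt (fun r : ℝ => r • (β u *ᵥ v)) (β u *ᵥ v) r := by
        simpa using (hasDerivAt_id r).smul_const (β u *ᵥ v)
      exact ((hΨ u v r).sub_const u).sub h1
    have hgb : ∀ r ∈ Icc (0:ℝ) 1, ‖β (Ψ u v r) *ᵥ v - β u *ᵥ v‖ ≤ C * ‖v‖ ^ 2 := by
      intro r hr
      have : β (Ψ u v r) *ᵥ v - β u *ᵥ v = (β (Ψ u v r) - β u) *ᵥ v := by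
        rw [Matrix.sub_mulVec]
      rw [this]
      have hentry : ∀ i j, |(β (Ψ u v r) - β u) i j| ≤ K * (n * M₀ * ‖v‖) := by
        intro i j
        have := (hlip i j).dist_le_mul (Ψ u v r) u
        rw [Real.dist_eq] at this
        calc |(β (Ψ u v r) - β u) i j| = |β (Ψ u v r) i j - β u i j| := by
              simp [Matrix.sub_apply]
          _ ≤ K * dist (Ψ u v r) u := this
          _ ≤ K * (n * M₀ * ‖v‖) := by
              apply mul_le_mul_of_nonneg_left _ (K.2)
              rw [dist_eq_norm]; exact step1 r hr
      calc ‖(β (Ψ u v r) - β u) *ᵥ v‖ ≤ n * (K * (n * M₀ * ‖v‖)) * ‖v‖ :=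
            mv_bound _ _ _ (by positivity) hentry
        _ = C * ‖v‖ ^ 2 := by rw [hC]; ring
    have := (convex_Icc (0:ℝ) 1).norm_image_sub_le_of_norm_hasDerivWithin_le
      (f := g) (C := C * ‖v‖ ^ 2)
      (fun x _ => (hg' x).hasDerivWithinAt) hgb
      ⟨le_refl 0, zero_le_one⟩ ⟨zero_le_one, le_refl 1⟩
    have hg1 : g 1 = H u v - u - β u *ᵥ v := by
      rw [hg, hH]; simp
    have hg0 : g 0 = 0 := by rw [hg]; simp [hΨ0]
    calc ‖H u v - u - β u *ᵥ v‖ = ‖g 1 - g 0‖ := by rw [hg1, hg0, sub_zero]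
      _ ≤ C * ‖v‖ ^ 2 * ‖(1:ℝ) - 0‖ := this
      _ = C * ‖v‖ ^ 2 := by simp
  constructor
  · exact ⟨C, fun v _ => key v⟩
  · rw [Asymptotics.isLittleO_iff]
    intro ε hε
    have hpos : (0:ℝ) < min 1 (ε / (C + 1)) := lt_min one_pos (by positivity)
    filter_upwards [Metric.ball_mem_nhds (0 : Fin n → ℝ) hpos] with v hv
    rw [Metric.mem_ball, dist_zero_right] at hv
    have hv1 : ‖v‖ < 1 := hv.trans_le (min_le_left _ _)
    have hv2 : ‖v‖ < ε / (C + 1) := hv.trans_le (min_le_right _ _)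
    calc ‖H u v - u - β u *ᵥ v‖ ≤ C * ‖v‖ ^ 2 := key v
      _ ≤ (C + 1) * ‖v‖ * ‖v‖ := by
          rw [sq, ← mul_assoc]
          have : C * ‖v‖ ≤ (C + 1) * ‖v‖ :=
            mul_le_mul_of_nonneg_right (by linarith) (norm_nonneg _)
          exact mul_le_mul_of_nonneg_right this (norm_nonneg _)
      _ ≤ (C + 1) * (ε / (C + 1)) * ‖v‖ := by
          apply mul_le_mul_of_nonneg_right _ (norm_nonneg _)
          exact mul_le_mul_of_nonneg_left hv2.le (by positivity)
      _ = ε * ‖v‖ := by field_simp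
      _ = ε * ‖(fun v : Fin n → ℝ => ‖v‖) v‖ := by rw [Real.norm_eq_abs, abs_of_nonneg (norm_nonneg _)]
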